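/- arXiv:1209.3578 — 2 statements merged into one kernel-verified Lean document; each statement's English description precedes it below -/
import Mathlib

section
/- Let f̃(r) = -C r^σ with C > 0 and σ ∈ [1/2, 1), and let F̃(r) = -(C/(σ+1)) r^{σ+1}. Then on a compact 2-dimensional Riemannian manifold M there exists C̃ > 0 such that for every u ∈ H^{1,2}(M;ℂ): ∫_M |f̃(|u(x)|²)| |u(x)|² dx ≤ (1/2)|∇u|_{L²}² + (1/2)∫_M F̃(|u(x)|²) dx + C̃ |u|_{L²}^{2/(1-σ)}. -/
/-!
Both nonlinear integrals are multiples of `I = ∫ |u|^{2σ+2}`, so the claim amounts to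
`(C + C/(2(σ+1))) I ≤ ½ |∇u|² + C̃ |u|_{L²}^{2/(1-σ)}`. Gagliardo–Nirenberg bounds the left side
by a multiple of `|∇u|^{2σ} |u|²_{L²}`, and weighted AM–GM with weights `σ` and `1 - σ` splits this product
into `½ |∇u|²` plus a multiple of `(|u|²_{L²})^{1/(1-σ)}`.
-/

open MeasureTheory

lemma sq_rpow_eq_rpow_two_mul {r : ℝ} (hr : 0 ≤ r) (s : ℝ) : (r ^ 2) ^ s = r ^ (2 * s) := by
  exact_mod_cast (Real.rpow_natCast_mul hr 2 s).symm

lemma mul_rpow_two_mul_le_half_sq_add {σ K g X : ℝ} (hσ0 : 0 < σ) (hσ1 : σ < 1)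
    (hK : 0 ≤ K) (hg : 0 ≤ g) (hX : 0 ≤ X) :
    K * g ^ (2 * σ) * X
      ≤ g ^ 2 / 2 + (1 - σ) * (2 ^ σ * K) ^ (1 / (1 - σ)) * X ^ (1 / (1 - σ)) := by
  have h1σ : 0 < 1 - σ := by linarith
  have hb : 0 ≤ 2 ^ σ * K * X := by positivity
  have hamgm := Real.geom_mean_le_arith_mean2_weighted hσ0.le h1σ.le
    (by positivity : 0 ≤ g ^ 2 / 2) (Real.rpow_nonneg hb (1 / (1 - σ))) (add_sub_cancel σ 1)
  have hfirst : (g ^ 2 / 2) ^ σ * 2 ^ σ = g ^ (2 * σ) := by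
    rw [← Real.mul_rpow (by positivity) (by norm_num), div_mul_cancel₀ _ two_ne_zero,
      sq_rpow_eq_rpow_two_mul hg]
  have hsecond : ((2 ^ σ * K * X) ^ (1 / (1 - σ))) ^ (1 - σ) = 2 ^ σ * K * X := by
    rw [← Real.rpow_mul hb, one_div_mul_cancel h1σ.ne', Real.rpow_one]
  rw [hsecond, Real.mul_rpow (by positivity) hX] at hamgm
  calc K * g ^ (2 * σ) * X = (g ^ 2 / 2) ^ σ * (2 ^ σ * K * X) := by rw [← hfirst]; ring
    _ ≤ σ * (g ^ 2 / 2) + (1 - σ) * ((2 ^ σ * K) ^ (1 / (1 - σ)) * X ^ (1 / (1 - σ))) := hamgm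
    _ ≤ _ := by nlinarith [sq_nonneg g]

lemma abs_neg_mul_rpow_mul_self {C t σ : ℝ} (hC : 0 ≤ C) (ht : 0 ≤ t) (hσ : σ + 1 ≠ 0) :
    |-C * t ^ σ| * t = C * t ^ (σ + 1) := by
  rw [abs_mul, abs_neg, abs_of_nonneg hC, abs_of_nonneg (Real.rpow_nonneg ht σ),
    Real.rpow_add_one' ht hσ, mul_assoc]

theorem focusing_energy_estimate_general
    {M : Type*} [MeasurableSpace M] (μ : Measure M) [IsFiniteMeasure μ]
    (C σ : ℝ) (hC : 0 < C) (hσ1 : 1 / 2 ≤ σ) (hσ2 : σ < 1)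
    (H12 : (M → ℂ) → Prop) (gradL2 : (M → ℂ) → ℝ)
    (hgrad_nonneg : ∀ u, 0 ≤ gradL2 u)
    (CGN : ℝ) (hCGN : 0 < CGN)
    (hGN : ∀ u : M → ℂ, H12 u →
      ∫ x, ‖u x‖ ^ (2 * σ + 2) ∂μ ≤ CGN * gradL2 u ^ (2 * σ) * ∫ x, ‖u x‖ ^ 2 ∂μ) :
    ∃ Ct : ℝ, 0 < Ct ∧ ∀ u : M → ℂ, H12 u →
      ∫ x, |(-C * (‖u x‖ ^ 2) ^ σ)| * ‖u x‖ ^ 2 ∂μ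
        ≤ (1 / 2) * gradL2 u ^ 2
          + (1 / 2) * ∫ x, (-(C / (σ + 1)) * (‖u x‖ ^ 2) ^ (σ + 1)) ∂μ
          + Ct * Real.sqrt (∫ x, ‖u x‖ ^ 2 ∂μ) ^ (2 / (1 - σ)) := by
  have hσ0 : 0 < σ := by linarith
  have h1σ : 0 < 1 - σ := by linarith
  set A := C + C / (2 * (σ + 1))
  have hA : 0 < A := by positivity
  refine ⟨(1 - σ) * (2 ^ σ * (A * CGN)) ^ (1 / (1 - σ)), by positivity, fun u hu => ?_⟩
  set I := ∫ x, ‖u x‖ ^ (2 * σ + 2) ∂μ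
  set X := ∫ x, ‖u x‖ ^ 2 ∂μ
  have hpow (x : M) : (‖u x‖ ^ 2) ^ (σ + 1) = ‖u x‖ ^ (2 * σ + 2) := by
    rw [sq_rpow_eq_rpow_two_mul (norm_nonneg _)]; ring_nf
  have hL : ∫ x, |(-C * (‖u x‖ ^ 2) ^ σ)| * ‖u x‖ ^ 2 ∂μ = C * I := by
    simp_rw [abs_neg_mul_rpow_mul_self hC.le (sq_nonneg _) (by linarith : σ + 1 ≠ 0), hpow]
    exact integral_const_mul C _
  have hR : ∫ x, (-(C / (σ + 1)) * (‖u x‖ ^ 2) ^ (σ + 1)) ∂μ = -(C / (σ + 1)) * I := by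
    simp_rw [hpow]
    exact integral_const_mul _ _
  have hX : 0 ≤ X := integral_nonneg fun x => by positivity
  have hsqrt : Real.sqrt X ^ (2 / (1 - σ)) = X ^ (1 / (1 - σ)) := by
    rw [Real.sqrt_eq_rpow, ← Real.rpow_mul hX]; congr 1; ring
  have hGNu : A * I ≤ A * CGN * gradL2 u ^ (2 * σ) * X := by
    simpa only [mul_assoc] using mul_le_mul_of_nonneg_left (hGN u hu) hA.le
  have hyoung := mul_rpow_two_mul_le_half_sq_add hσ0 hσ2 (mul_pos hA hCGN).le (hgrad_nonneg u) hX
  have hAI : A * I = C * I + 1 / 2 * (C / (σ + 1) * I) := by simp only [A]; field_simp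
  rw [hL, hR, hsqrt]
  linarith

/-- Focusing estimate on a compact 2-dimensional Riemannian manifold.  With
`f̃(r) = -C r^σ`, `F̃(r) = -(C/(σ+1)) r^{σ+1}`, `σ ∈ [1/2,1)`, the manifold encoded as a
finite measure space with Sobolev predicate `H12` and gradient `L²`-norm `gradL2`, and the
Gagliardo–Nirenberg inequality `∫ |u|^{2σ+2} ≤ C_GN |∇u|_{L²}^{2σ} |u|_{L²}²` assumed,
there exists `C̃ > 0` such that for every `u ∈ H^{1,2}`:
`∫ |f̃(|u|²)| |u|² ≤ (1/2)|∇u|_{L²}² + (1/2)∫ F̃(|u|²) + C̃ |u|_{L²}^{2/(1-σ)}`. -/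
theorem focusing_energy_estimate
    {M : Type*} [MeasurableSpace M] (μ : Measure M) [IsFiniteMeasure μ]
    (C σ : ℝ) (hC : 0 < C) (hσ1 : 1 / 2 ≤ σ) (hσ2 : σ < 1)
    (H12 : (M → ℂ) → Prop) (gradL2 : (M → ℂ) → ℝ)
    (hgrad_nonneg : ∀ u, 0 ≤ gradL2 u)
    (CGN : ℝ) (hCGN : 0 < CGN)
    (hGN : ∀ u : M → ℂ, H12 u →
      ∫ x, ‖u x‖ ^ (2 * σ + 2) ∂μ ≤ CGN * gradL2 u ^ (2 * σ) * ∫ x, ‖u x‖ ^ 2 ∂μ)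
    (hint : ∀ u : M → ℂ, H12 u → Integrable (fun x => ‖u x‖ ^ (2 * σ + 2)) μ) :
    ∃ Ct : ℝ, 0 < Ct ∧ ∀ u : M → ℂ, H12 u →
      ∫ x, |(-C * (‖u x‖ ^ 2) ^ σ)| * ‖u x‖ ^ 2 ∂μ
        ≤ (1 / 2) * gradL2 u ^ 2
          + (1 / 2) * ∫ x, (-(C / (σ + 1)) * (‖u x‖ ^ 2) ^ (σ + 1)) ∂μ
          + Ct * Real.sqrt (∫ x, ‖u x‖ ^ 2 ∂μ) ^ (2 / (1 - σ)) :=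
  focusing_energy_estimate_general μ C σ hC hσ1 hσ2 H12 gradL2 hgrad_nonneg CGN hCGN hGN
end

section
/- Let D be a compact d-dimensional Riemannian manifold, θ ∈ (0,1), q ∈ [1,∞), Y, Y₁ real separable Banach spaces, and f : Y → Y₁ of class C¹ with f' Lipschitz on balls. Set K₁(f,R) = sup_{|x|,|y|≤R, x≠y} |f(y)-f(x)|/|y-x| and K₂(f,R) = sup_{|x|,|y|≤R, x≠y} ‖f'(y)-f'(x)‖/|y-x|. Then for all γ, σ ∈ W^{θ,q}(D;Y) ∩ L^∞(D;Y), with R = max(|γ|_∞, |σ|_∞): [f∘γ - f∘σ]_{θ,q} ≤ K₂(f,R)·|γ-σ|_∞·([σ]_{θ,q} + (1/2)[γ-σ]_{θ,q}) + K₁(f,R)·[γ-σ]_{θ,q}. -/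
/-!
Write `x, y` for the values of `σ` and `u, v` for those of `γ` at two points of `D`. Along the
segments `a t = x + t (u - x)` and `b t = y + t (v - y)`, which stay in the ball of radius `R`,
the derivative of `f ∘ a - f ∘ b` is `(f'(a t) - f'(b t)) (u - x) + f'(b t) ((u - x) - (v - y))`.
Since `‖f'‖ ≤ K₁` on that ball (converse mean value inequality), its norm is at most
`K₂ M (‖x - y‖ + t ‖(u - x) - (v - y)‖) + K₁ ‖(u - x) - (v - y)‖`, and integrating over `[0, 1]`
gives a pointwise four-point estimate; the factor `1/2` is `∫₀¹ t dt`. Dividing by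
`dist^((d + θq)/q)` makes it an a.e. bound between Gagliardo difference quotients, and
Minkowski's inequality in `L^q(D × D)` concludes.
-/

open MeasureTheory

/-- Gagliardo seminorm `[φ]_{θ,q}` for `Y`-valued maps on a metric measure space `D`
(`d` plays the role of the dimension of the compact manifold). -/
noncomputable def gagliardoSeminormV {D : Type*} [MetricSpace D] [MeasurableSpace D]
    {Y : Type*} [NormedAddCommGroup Y]
    (μ : Measure D) (d : ℕ) (θ q : ℝ) (φ : D → Y) : ℝ :=
  (∫ p : D × D, ‖φ p.1 - φ p.2‖ ^ q / dist p.1 p.2 ^ ((d : ℝ) + θ * q) ∂(μ.prod μ)) ^ (1 / q)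

/-- The `L^∞` norm of a `Y`-valued map. -/
noncomputable def linftyNormV {D : Type*} [MeasurableSpace D] {Y : Type*}
    [NormedAddCommGroup Y] (μ : Measure D) (φ : D → Y) : ℝ :=
  (eLpNorm φ ⊤ μ).toReal

open Set

theorem ContinuousLinearMap.norm_apply_sub_apply_le {𝕜 E F : Type*} [NontriviallyNormedField 𝕜]
    [NormedAddCommGroup E] [NormedSpace 𝕜 E] [NormedAddCommGroup F] [NormedSpace 𝕜 F]
    (A B : E →L[𝕜] F) (u v : E) : ‖A u - B v‖ ≤ ‖A - B‖ * ‖u‖ + ‖B‖ * ‖u - v‖ := by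
  calc ‖A u - B v‖ = ‖(A - B) u + B (u - v)‖ := by
        rw [sub_apply, map_sub]; abel_nf
    _ ≤ ‖A - B‖ * ‖u‖ + ‖B‖ * ‖u - v‖ :=
        (norm_add_le _ _).trans (add_le_add ((A - B).le_opNorm u) (B.le_opNorm _))

theorem norm_sub_le_of_norm_deriv_le_affine {E : Type*} [NormedAddCommGroup E]
    [NormedSpace ℝ E] {g g' : ℝ → E} {c₁ c₂ : ℝ} (hg : ∀ t, HasDerivAt g (g' t) t)
    (hbound : ∀ t ∈ Ico (0 : ℝ) 1, ‖g' t‖ ≤ c₁ + c₂ * t) : ‖g 1 - g 0‖ ≤ c₁ + c₂ / 2 := by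
  have hB : ∀ t : ℝ, HasDerivAt (fun t => c₁ * t + c₂ / 2 * t ^ 2) (c₁ + c₂ * t) t := fun t =>
    (((hasDerivAt_id' t).const_mul c₁).add ((hasDerivAt_pow 2 t).const_mul (c₂ / 2))).congr_deriv
      (by ring)
  have key := image_norm_le_of_norm_deriv_right_le_deriv_boundary (f := fun t => g t - g 0)
    (fun t _ => ((hg t).continuousAt.sub continuousAt_const).continuousWithinAt)
    (fun t _ => ((hg t).sub_const (g 0)).hasDerivWithinAt) (by simp) hB hbound
    (right_mem_Icc.2 zero_le_one)
  exact key.trans_eq (by ring)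

section NemytskiPointwise

variable {Y Y₁ : Type*} [NormedAddCommGroup Y] [NormedSpace ℝ Y]
  [NormedAddCommGroup Y₁] [NormedSpace ℝ Y₁] {f : Y → Y₁} {K₁ K₂ R : ℝ}

theorem norm_fderiv_le_of_lipschitz_on_closedBall (hf : ContDiff ℝ 1 f) (hK₁0 : 0 ≤ K₁)
    (hR : 0 < R) (hK₁ : ∀ x y : Y, ‖x‖ ≤ R → ‖y‖ ≤ R → ‖f y - f x‖ ≤ K₁ * ‖y - x‖)
    {z : Y} (hz : ‖z‖ ≤ R) : ‖fderiv ℝ f z‖ ≤ K₁ := by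
  have hball : Metric.ball (0 : Y) R ⊆ {w | ‖fderiv ℝ f w‖ ≤ K₁} := fun w hw => by
    rw [mem_ball_zero_iff] at hw
    refine norm_fderiv_le_of_lip' ℝ hK₁0 ?_
    filter_upwards [Metric.isOpen_ball.mem_nhds (mem_ball_zero_iff.2 hw)] with x hx
    exact hK₁ w x hw.le (mem_ball_zero_iff.1 hx).le
  have hclosed : IsClosed {w : Y | ‖fderiv ℝ f w‖ ≤ K₁} :=
    isClosed_le (hf.continuous_fderiv one_ne_zero).norm continuous_const
  have hz' : z ∈ closure (Metric.ball (0 : Y) R) := by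
    rwa [closure_ball _ hR.ne', mem_closedBall_zero_iff]
  exact closure_minimal hball hclosed hz'

theorem norm_fderiv_apply_sub_fderiv_apply_le
    (hf' : ∀ z : Y, ‖z‖ ≤ R → ‖fderiv ℝ f z‖ ≤ K₁)
    (hK₂ : ∀ x y : Y, ‖x‖ ≤ R → ‖y‖ ≤ R → ‖fderiv ℝ f y - fderiv ℝ f x‖ ≤ K₂ * ‖y - x‖)
    {a b : Y} (ha : ‖a‖ ≤ R) (hb : ‖b‖ ≤ R) (δ₁ δ₂ : Y) :
    ‖fderiv ℝ f a δ₁ - fderiv ℝ f b δ₂‖ ≤ K₂ * ‖a - b‖ * ‖δ₁‖ + K₁ * ‖δ₁ - δ₂‖ :=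
  (ContinuousLinearMap.norm_apply_sub_apply_le _ _ _ _).trans <| add_le_add
    (mul_le_mul_of_nonneg_right (hK₂ b a hb ha) (norm_nonneg _))
    (mul_le_mul_of_nonneg_right (hf' b hb) (norm_nonneg _))

theorem norm_map_sub_sub_map_sub_le_of_norm_fderiv_le (hf : Differentiable ℝ f) {M : ℝ}
    (hK₂0 : 0 ≤ K₂) (hf' : ∀ z : Y, ‖z‖ ≤ R → ‖fderiv ℝ f z‖ ≤ K₁)
    (hK₂ : ∀ x y : Y, ‖x‖ ≤ R → ‖y‖ ≤ R → ‖fderiv ℝ f y - fderiv ℝ f x‖ ≤ K₂ * ‖y - x‖)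
    {x y u v : Y} (hx : ‖x‖ ≤ R) (hy : ‖y‖ ≤ R) (hu : ‖u‖ ≤ R) (hv : ‖v‖ ≤ R)
    (hux : ‖u - x‖ ≤ M) :
    ‖(f u - f x) - (f v - f y)‖
      ≤ K₂ * M * (‖x - y‖ + 1 / 2 * ‖(u - x) - (v - y)‖) + K₁ * ‖(u - x) - (v - y)‖ := by
  set c₁ := K₂ * M * ‖x - y‖ + K₁ * ‖(u - x) - (v - y)‖
  set c₂ := K₂ * M * ‖(u - x) - (v - y)‖
  set a : ℝ → Y := fun t => x + t • (u - x)
  set b : ℝ → Y := fun t => y + t • (v - y)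
  have hseg : ∀ {z w : Y}, ‖z‖ ≤ R → ‖w‖ ≤ R → ∀ t ∈ Icc (0 : ℝ) 1, ‖z + t • (w - z)‖ ≤ R :=
    fun hz hw t ht => mem_closedBall_zero_iff.1 <| (convex_closedBall 0 R).add_smul_sub_mem
      (mem_closedBall_zero_iff.2 hz) (mem_closedBall_zero_iff.2 hw) ht
  have hline : ∀ (z δ : Y) (t : ℝ), HasDerivAt (fun t : ℝ => z + t • δ) δ t := fun z δ t => by
    simpa using ((hasDerivAt_id t).smul_const δ).const_add z
  have hderiv : ∀ t, HasDerivAt (fun t => f (a t) - f (b t))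
      (fderiv ℝ f (a t) (u - x) - fderiv ℝ f (b t) (v - y)) t := fun t =>
    ((hf _).hasFDerivAt.comp_hasDerivAt t (hline x _ t)).sub
      ((hf _).hasFDerivAt.comp_hasDerivAt t (hline y _ t))
  have hbound : ∀ t ∈ Ico (0 : ℝ) 1,
      ‖fderiv ℝ f (a t) (u - x) - fderiv ℝ f (b t) (v - y)‖ ≤ c₁ + c₂ * t := by
    intro t ht
    have ha := hseg hx hu t (Ico_subset_Icc_self ht)
    have hb := hseg hy hv t (Ico_subset_Icc_self ht)
    have hab : ‖a t - b t‖ ≤ ‖x - y‖ + t * ‖(u - x) - (v - y)‖ := by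
      have e : a t - b t = (x - y) + t • ((u - x) - (v - y)) := by simp only [a, b]; module
      rw [e]
      refine (norm_add_le _ _).trans_eq ?_
      rw [norm_smul, Real.norm_of_nonneg ht.1]
    calc ‖fderiv ℝ f (a t) (u - x) - fderiv ℝ f (b t) (v - y)‖
        ≤ K₂ * ‖a t - b t‖ * ‖u - x‖ + K₁ * ‖(u - x) - (v - y)‖ :=
          norm_fderiv_apply_sub_fderiv_apply_le hf' hK₂ ha hb _ _
      _ ≤ K₂ * (‖x - y‖ + t * ‖(u - x) - (v - y)‖) * M + K₁ * ‖(u - x) - (v - y)‖ := by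
          gcongr
          exact mul_nonneg hK₂0 ((norm_nonneg _).trans hab)
      _ = c₁ + c₂ * t := by ring
  have e : (f (a 1) - f (b 1)) - (f (a 0) - f (b 0)) = (f u - f x) - (f v - f y) := by
    simp only [a, b, one_smul, zero_smul, add_zero, add_sub_cancel]; abel
  rw [← e]
  exact (norm_sub_le_of_norm_deriv_le_affine hderiv hbound).trans_eq (by ring)

theorem norm_map_sub_sub_map_sub_le (hf : ContDiff ℝ 1 f) {M : ℝ}
    (hK₁0 : 0 ≤ K₁) (hK₂0 : 0 ≤ K₂)
    (hK₁ : ∀ x y : Y, ‖x‖ ≤ R → ‖y‖ ≤ R → ‖f y - f x‖ ≤ K₁ * ‖y - x‖)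
    (hK₂ : ∀ x y : Y, ‖x‖ ≤ R → ‖y‖ ≤ R → ‖fderiv ℝ f y - fderiv ℝ f x‖ ≤ K₂ * ‖y - x‖)
    {x y u v : Y} (hx : ‖x‖ ≤ R) (hy : ‖y‖ ≤ R) (hu : ‖u‖ ≤ R) (hv : ‖v‖ ≤ R)
    (hux : ‖u - x‖ ≤ M) :
    ‖(f u - f x) - (f v - f y)‖
      ≤ K₂ * M * (‖x - y‖ + 1 / 2 * ‖(u - x) - (v - y)‖) + K₁ * ‖(u - x) - (v - y)‖ := by
  rcases ((norm_nonneg x).trans hx).eq_or_lt with rfl | hR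
  · simp only [norm_le_zero_iff] at hx hy hu hv
    subst x y u v
    have hM : 0 ≤ M := (norm_nonneg _).trans hux
    simp only [sub_self, norm_zero]
    positivity
  · exact norm_map_sub_sub_map_sub_le_of_norm_fderiv_le (hf.differentiable one_ne_zero) hK₂0
      (fun z hz => norm_fderiv_le_of_lipschitz_on_closedBall hf hK₁0 hR hK₁ hz) hK₂ hx hy hu hv
      hux

end NemytskiPointwise

section LpNorm

variable {α : Type*} [MeasurableSpace α] {μ : Measure α}

theorem lpNorm_le_of_ae_le {E : Type*} [NormedAddCommGroup E] {f : α → E} {g : α → ℝ}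
    {p : ENNReal} (hg : MemLp g p μ) (h : ∀ᵐ x ∂μ, ‖f x‖ ≤ g x) :
    lpNorm f p μ ≤ lpNorm g p μ := by
  by_cases hf : AEStronglyMeasurable f μ
  · rw [← toReal_eLpNorm hf, ← toReal_eLpNorm hg.aestronglyMeasurable]
    exact ENNReal.toReal_mono hg.eLpNorm_ne_top (eLpNorm_mono_ae_real h)
  · simp [lpNorm_of_not_aestronglyMeasurable hf]

theorem lpNorm_le_of_ae_le_add {E : Type*} [NormedAddCommGroup E] {G : α → E} {U V : α → ℝ}
    {p : ENNReal} {a c : ℝ} (hp : 1 ≤ p) (hU : MemLp U p μ) (hV : MemLp V p μ) (ha : 0 ≤ a)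
    (hc : 0 ≤ c) (h : ∀ᵐ x ∂μ, ‖G x‖ ≤ a * U x + c * V x) :
    lpNorm G p μ ≤ a * lpNorm U p μ + c * lpNorm V p μ := by
  calc lpNorm G p μ ≤ lpNorm (a • U + c • V) p μ :=
        lpNorm_le_of_ae_le ((hU.const_smul a).add (hV.const_smul c)) h
    _ ≤ lpNorm (a • U) p μ + lpNorm (c • V) p μ := lpNorm_add_le (hU.const_smul a) hp
    _ = a * lpNorm U p μ + c * lpNorm V p μ := by
        rw [lpNorm_const_smul, lpNorm_const_smul, coe_nnnorm, coe_nnnorm, Real.norm_of_nonneg ha,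
          Real.norm_of_nonneg hc]

variable {F : α → ℝ} {q : ℝ}

theorem aestronglyMeasurable_of_integrable_rpow (hF : ∀ x, 0 ≤ F x) (hq : 0 < q)
    (h : Integrable (fun x => F x ^ q) μ) : AEStronglyMeasurable F μ := by
  have e : F = fun x => (F x ^ q) ^ q⁻¹ :=
    funext fun x => (Real.rpow_rpow_inv (hF x) hq.ne').symm
  rw [e]
  exact (Real.continuous_rpow_const (inv_nonneg.2 hq.le)).comp_aestronglyMeasurable h.1

theorem memLp_ofReal_of_integrable_rpow (hF : ∀ x, 0 ≤ F x) (hq : 0 < q)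
    (h : Integrable (fun x => F x ^ q) μ) : MemLp F (ENNReal.ofReal q) μ := by
  rw [← integrable_norm_rpow_iff (aestronglyMeasurable_of_integrable_rpow hF hq h)
    (by simpa using hq) ENNReal.ofReal_ne_top, ENNReal.toReal_ofReal hq.le]
  simpa only [Real.norm_of_nonneg (hF _)] using h

theorem integral_rpow_rpow_inv_eq_lpNorm (hF : ∀ x, 0 ≤ F x) (hq : 0 < q) :
    (∫ x, F x ^ q ∂μ) ^ q⁻¹ = lpNorm F (ENNReal.ofReal q) μ := by
  by_cases hFm : AEStronglyMeasurable F μ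
  · rw [lpNorm_eq_integral_norm_rpow_toReal (by simpa using hq) ENNReal.ofReal_ne_top hFm,
      ENNReal.toReal_ofReal hq.le]
    simp only [Real.norm_of_nonneg (hF _)]
  · -- then `F ^ q` is not integrable either, and both sides are the junk value `0`
    have hint : ¬ Integrable (fun x => F x ^ q) μ :=
      fun h => hFm (aestronglyMeasurable_of_integrable_rpow hF hq h)
    rw [integral_undef hint, Real.zero_rpow (inv_ne_zero hq.ne'),
      lpNorm_of_not_aestronglyMeasurable hFm]

end LpNorm

theorem ae_norm_le_linftyNormV {α E : Type*} [MeasurableSpace α] [NormedAddCommGroup E]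
    {μ : Measure α} {φ : α → E} (hφ : MemLp φ ⊤ μ) : ∀ᵐ x ∂μ, ‖φ x‖ ≤ linftyNormV μ φ := by
  rw [linftyNormV, toReal_eLpNorm hφ.aestronglyMeasurable]
  exact ae_le_lpNorm_exponent_top hφ

section Gagliardo

variable {D : Type*} [MetricSpace D] {Y : Type*} [NormedAddCommGroup Y]
  {d : ℕ} {θ q : ℝ}

noncomputable def gagliardoQuotient (d : ℕ) (θ q : ℝ) (φ : D → Y) (p : D × D) : ℝ :=
  ‖φ p.1 - φ p.2‖ / dist p.1 p.2 ^ (((d : ℝ) + θ * q) / q)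

theorem gagliardoQuotient_nonneg (φ : D → Y) (p : D × D) :
    0 ≤ gagliardoQuotient d θ q φ p := by
  unfold gagliardoQuotient; positivity

theorem gagliardoQuotient_rpow (hq : 0 < q) (φ : D → Y) (p : D × D) :
    gagliardoQuotient d θ q φ p ^ q
      = ‖φ p.1 - φ p.2‖ ^ q / dist p.1 p.2 ^ ((d : ℝ) + θ * q) := by
  rw [gagliardoQuotient, Real.div_rpow (norm_nonneg _) (Real.rpow_nonneg dist_nonneg _),
    ← Real.rpow_mul dist_nonneg, div_mul_cancel₀ _ hq.ne']

theorem gagliardoSeminormV_eq_lpNorm [MeasurableSpace D] (μ : Measure D) (hq : 0 < q)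
    (φ : D → Y) :
    gagliardoSeminormV μ d θ q φ
      = lpNorm (gagliardoQuotient d θ q φ) (ENNReal.ofReal q) (μ.prod μ) := by
  rw [← integral_rpow_rpow_inv_eq_lpNorm (gagliardoQuotient_nonneg φ) hq, gagliardoSeminormV,
    one_div]
  simp only [gagliardoQuotient_rpow hq]

theorem memLp_gagliardoQuotient [MeasurableSpace D] {μ : Measure D} (hq : 0 < q) {φ : D → Y}
    (h : Integrable (fun p : D × D =>
      ‖φ p.1 - φ p.2‖ ^ q / dist p.1 p.2 ^ ((d : ℝ) + θ * q)) (μ.prod μ)) :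
    MemLp (gagliardoQuotient d θ q φ) (ENNReal.ofReal q) (μ.prod μ) :=
  memLp_ofReal_of_integrable_rpow (gagliardoQuotient_nonneg φ) hq
    (by simpa only [gagliardoQuotient_rpow hq] using h)

theorem gagliardoQuotient_le_of_norm_sub_le {Y₂ Y₃ : Type*} [NormedAddCommGroup Y₂]
    [NormedAddCommGroup Y₃] {φ : D → Y} {ψ : D → Y₂} {χ : D → Y₃} {a c : ℝ} {p : D × D}
    (h : ‖φ p.1 - φ p.2‖ ≤ a * ‖ψ p.1 - ψ p.2‖ + c * ‖χ p.1 - χ p.2‖) :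
    gagliardoQuotient d θ q φ p
      ≤ a * gagliardoQuotient d θ q ψ p + c * gagliardoQuotient d θ q χ p := by
  simp only [gagliardoQuotient, mul_div_assoc', ← add_div]
  exact div_le_div_of_nonneg_right h (Real.rpow_nonneg dist_nonneg _)

end Gagliardo

theorem ae_gagliardoQuotient_map_sub_map_le {D : Type*} [MetricSpace D] [MeasurableSpace D]
    {μ : Measure D} {Y Y₁ : Type*} [NormedAddCommGroup Y] [NormedSpace ℝ Y]
    [NormedAddCommGroup Y₁] [NormedSpace ℝ Y₁] {d : ℕ} {θ q : ℝ}
    {f : Y → Y₁} (hf : ContDiff ℝ 1 f) {K₁ K₂ R M : ℝ} (hK₁0 : 0 ≤ K₁) (hK₂0 : 0 ≤ K₂)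
    (hK₁ : ∀ x y : Y, ‖x‖ ≤ R → ‖y‖ ≤ R → ‖f y - f x‖ ≤ K₁ * ‖y - x‖)
    (hK₂ : ∀ x y : Y, ‖x‖ ≤ R → ‖y‖ ≤ R → ‖fderiv ℝ f y - fderiv ℝ f x‖ ≤ K₂ * ‖y - x‖)
    {γ σ : D → Y} (hγ : ∀ᵐ x ∂μ, ‖γ x‖ ≤ R) (hσ : ∀ᵐ x ∂μ, ‖σ x‖ ≤ R)
    (hγσ : ∀ᵐ x ∂μ, ‖γ x - σ x‖ ≤ M) :
    ∀ᵐ p ∂μ.prod μ, gagliardoQuotient d θ q (fun x => f (γ x) - f (σ x)) p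
      ≤ K₂ * M * gagliardoQuotient d θ q σ p
        + (K₂ * M / 2 + K₁) * gagliardoQuotient d θ q (fun x => γ x - σ x) p := by
  have h := hγ.and (hσ.and hγσ)
  filter_upwards [Measure.quasiMeasurePreserving_fst.ae h,
    Measure.quasiMeasurePreserving_snd.ae h] with p ⟨hγ₁, hσ₁, hγσ₁⟩ ⟨hγ₂, hσ₂, _⟩
  refine gagliardoQuotient_le_of_norm_sub_le ?_
  have := norm_map_sub_sub_map_sub_le hf hK₁0 hK₂0 hK₁ hK₂ hσ₁ hσ₂ hγ₁ hγ₂ hγσ₁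
  linarith

theorem nemytski_lipschitz_on_balls_general
    {D : Type*} [MetricSpace D] [MeasurableSpace D]
    (μ : Measure D)
    {Y Y₁ : Type*} [NormedAddCommGroup Y] [NormedSpace ℝ Y]
    [NormedAddCommGroup Y₁] [NormedSpace ℝ Y₁]
    (d : ℕ) (θ q : ℝ) (hq : 1 ≤ q)
    (f : Y → Y₁) (hf : ContDiff ℝ 1 f)
    (K₁ K₂ : ℝ → ℝ) (hK₁_nonneg : ∀ R, 0 ≤ K₁ R) (hK₂_nonneg : ∀ R, 0 ≤ K₂ R)
    (hK₁ : ∀ R : ℝ, ∀ x y : Y, ‖x‖ ≤ R → ‖y‖ ≤ R → ‖f y - f x‖ ≤ K₁ R * ‖y - x‖)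
    (hK₂ : ∀ R : ℝ, ∀ x y : Y, ‖x‖ ≤ R → ‖y‖ ≤ R →
      ‖fderiv ℝ f y - fderiv ℝ f x‖ ≤ K₂ R * ‖y - x‖)
    (γ σ : D → Y)
    (hγ_bdd : MemLp γ ⊤ μ) (hσ_bdd : MemLp σ ⊤ μ)
    (hσ_gag : Integrable (fun p : D × D =>
      ‖σ p.1 - σ p.2‖ ^ q / dist p.1 p.2 ^ ((d : ℝ) + θ * q)) (μ.prod μ))
    (hdiff_gag : Integrable (fun p : D × D =>
      ‖(γ p.1 - σ p.1) - (γ p.2 - σ p.2)‖ ^ q / dist p.1 p.2 ^ ((d : ℝ) + θ * q))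
      (μ.prod μ)) :
    gagliardoSeminormV μ d θ q (fun x => f (γ x) - f (σ x))
      ≤ K₂ (max (linftyNormV μ γ) (linftyNormV μ σ)) * linftyNormV μ (fun x => γ x - σ x)
          * (gagliardoSeminormV μ d θ q σ
            + (1 / 2) * gagliardoSeminormV μ d θ q (fun x => γ x - σ x))
        + K₁ (max (linftyNormV μ γ) (linftyNormV μ σ))
          * gagliardoSeminormV μ d θ q (fun x => γ x - σ x) := by
  have hq0 : 0 < q := by linarith
  set R := max (linftyNormV μ γ) (linftyNormV μ σ)
  set M := linftyNormV μ (fun x => γ x - σ x)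
  have hM : 0 ≤ M := ENNReal.toReal_nonneg
  have hptw := ae_gagliardoQuotient_map_sub_map_le (d := d) (θ := θ) (q := q) hf
    (hK₁_nonneg R) (hK₂_nonneg R) (hK₁ R) (hK₂ R)
    ((ae_norm_le_linftyNormV hγ_bdd).mono fun _ h => h.trans (le_max_left _ _))
    ((ae_norm_le_linftyNormV hσ_bdd).mono fun _ h => h.trans (le_max_right _ _))
    (ae_norm_le_linftyNormV (hγ_bdd.sub hσ_bdd))
  simp only [gagliardoSeminormV_eq_lpNorm μ hq0]
  calc _ ≤ K₂ R * M * lpNorm (gagliardoQuotient d θ q σ) (ENNReal.ofReal q) (μ.prod μ)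
        + (K₂ R * M / 2 + K₁ R)
          * lpNorm (gagliardoQuotient d θ q (fun x => γ x - σ x)) (ENNReal.ofReal q) (μ.prod μ) :=
        lpNorm_le_of_ae_le_add (ENNReal.one_le_ofReal.2 hq) (memLp_gagliardoQuotient hq0 hσ_gag)
          (memLp_gagliardoQuotient hq0 hdiff_gag) (mul_nonneg (hK₂_nonneg R) hM)
          (by linarith [hK₁_nonneg R, mul_nonneg (hK₂_nonneg R) hM])
          (hptw.mono fun p hp => (Real.norm_of_nonneg (gagliardoQuotient_nonneg _ p)).trans_le hp)
    _ = _ := by ring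

/-- Local Lipschitz estimate for the Nemytski operator in the Gagliardo seminorm:
for `f : Y → Y₁` of class `C¹` with `f'` Lipschitz on balls, and
`R = max(|γ|_∞, |σ|_∞)`,
`[f∘γ - f∘σ]_{θ,q} ≤ K₂(f,R) |γ-σ|_∞ ([σ]_{θ,q} + ½[γ-σ]_{θ,q}) + K₁(f,R) [γ-σ]_{θ,q}`. -/
theorem nemytski_lipschitz_on_balls
    {D : Type*} [MetricSpace D] [MeasurableSpace D] [OpensMeasurableSpace D]
    (μ : Measure D) [IsFiniteMeasure μ]
    {Y Y₁ : Type*} [NormedAddCommGroup Y] [NormedSpace ℝ Y] [SecondCountableTopology Y]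
    [NormedAddCommGroup Y₁] [NormedSpace ℝ Y₁] [SecondCountableTopology Y₁]
    (d : ℕ) (θ q : ℝ) (hθ : θ ∈ Set.Ioo (0 : ℝ) 1) (hq : 1 ≤ q)
    (f : Y → Y₁) (hf : ContDiff ℝ 1 f)
    (K₁ K₂ : ℝ → ℝ) (hK₁_nonneg : ∀ R, 0 ≤ K₁ R) (hK₂_nonneg : ∀ R, 0 ≤ K₂ R)
    (hK₁ : ∀ R : ℝ, ∀ x y : Y, ‖x‖ ≤ R → ‖y‖ ≤ R → ‖f y - f x‖ ≤ K₁ R * ‖y - x‖)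
    (hK₂ : ∀ R : ℝ, ∀ x y : Y, ‖x‖ ≤ R → ‖y‖ ≤ R →
      ‖fderiv ℝ f y - fderiv ℝ f x‖ ≤ K₂ R * ‖y - x‖)
    (γ σ : D → Y)
    (hγ_bdd : MemLp γ ⊤ μ) (hσ_bdd : MemLp σ ⊤ μ)
    (hγ_Lq : MemLp γ (ENNReal.ofReal q) μ) (hσ_Lq : MemLp σ (ENNReal.ofReal q) μ)
    (hσ_gag : Integrable (fun p : D × D =>
      ‖σ p.1 - σ p.2‖ ^ q / dist p.1 p.2 ^ ((d : ℝ) + θ * q)) (μ.prod μ))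
    (hdiff_gag : Integrable (fun p : D × D =>
      ‖(γ p.1 - σ p.1) - (γ p.2 - σ p.2)‖ ^ q / dist p.1 p.2 ^ ((d : ℝ) + θ * q))
      (μ.prod μ)) :
    gagliardoSeminormV μ d θ q (fun x => f (γ x) - f (σ x))
      ≤ K₂ (max (linftyNormV μ γ) (linftyNormV μ σ)) * linftyNormV μ (fun x => γ x - σ x)
          * (gagliardoSeminormV μ d θ q σ
            + (1 / 2) * gagliardoSeminormV μ d θ q (fun x => γ x - σ x))
        + K₁ (max (linftyNormV μ γ) (linftyNormV μ σ))
          * gagliardoSeminormV μ d θ q (fun x => γ x - σ x) :=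
  nemytski_lipschitz_on_balls_general μ d θ q hq f hf K₁ K₂ hK₁_nonneg hK₂_nonneg hK₁ hK₂ γ σ hγ_bdd
    hσ_bdd hσ_gag hdiff_gag
end
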